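/- Let Λ be a nonempty set, let c, β, B be real numbers with 0 < c ≤ 1, β > 0 and B ≥ 0, let π⁽¹⁾,…,π⁽ᴹ⁾: Λ → ℝ satisfy c ≤ π⁽ᵐ⁾(λ) ≤ 1 for all m and λ, with iteration indices t⁽¹⁾ < … < t⁽ᴹ⁾ ∈ ℕ, and let α: Λ × ℕ → ℝ satisfy |α(λ,t)| ≤ B for all λ ∈ Λ and t ∈ ℕ. Define the prior-adjusted acquisition α_dyna(λ,t) := α(λ,t) · ∏_{m=1}^{M} π⁽ᵐ⁾(λ)^(β/(t - t⁽ᵐ⁾)) for t > t⁽ᴹ⁾. Then sup_{λ∈Λ} |α_dyna(λ,t) - α(λ,t)| → 0 as t → ∞; that is, the dynamically adapted acquisition function converges uniformly to the unadjusted acquisition function. -/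

import Mathlib

/-! For `t` past every `t⁽ᵐ⁾` all exponents `β / (t - t⁽ᵐ⁾)` are nonnegative, so with
`S t = ∑ₘ β / (t - t⁽ᵐ⁾)` the product of the priors lies in `[c ^ S t, 1]` for every `λ`.
Hence `|α_dyna(λ, t) - α(λ, t)| ≤ B (1 - c ^ S t)` uniformly in `λ`, and the right-hand
side tends to `0` because `S t → 0`. -/

open Filter Topology Finset

theorem tendsto_iSup_abs_zero_of_abs_le {ι α : Type*} {l : Filter α} {f : ι → α → ℝ}
    {g : α → ℝ} (hg : Tendsto g l (𝓝 0)) (hfg : ∀ᶠ t in l, ∀ i, |f i t| ≤ g t) :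
    Tendsto (fun t => ⨆ i, |f i t|) l (𝓝 0) := by
  -- `max (g t) 0` rather than `g t` keeps the bound valid when `ι` is empty.
  have hmax : Tendsto (fun t => max (g t) 0) l (𝓝 0) := by
    simpa using hg.max (tendsto_const_nhds (x := (0 : ℝ)))
  refine tendsto_of_tendsto_of_tendsto_of_le_of_le' tendsto_const_nhds hmax
    (Eventually.of_forall fun t => Real.iSup_nonneg fun i => abs_nonneg _) ?_
  filter_upwards [hfg] with t ht
  exact Real.iSup_le (fun i => (ht i).trans (le_max_left _ _)) (le_max_right _ _)

theorem prod_rpow_le_one {ι : Type*} (s : Finset ι) {x e : ι → ℝ}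
    (hx0 : ∀ i ∈ s, 0 ≤ x i) (hx1 : ∀ i ∈ s, x i ≤ 1) (he : ∀ i ∈ s, 0 ≤ e i) :
    ∏ i ∈ s, x i ^ e i ≤ 1 :=
  prod_le_one (fun i hi => Real.rpow_nonneg (hx0 i hi) _)
    (fun i hi => Real.rpow_le_one (hx0 i hi) (hx1 i hi) (he i hi))

theorem rpow_sum_le_prod_rpow {ι : Type*} (s : Finset ι) {c : ℝ} (hc : 0 < c)
    {x e : ι → ℝ} (hcx : ∀ i ∈ s, c ≤ x i) (he : ∀ i ∈ s, 0 ≤ e i) :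
    c ^ ∑ i ∈ s, e i ≤ ∏ i ∈ s, x i ^ e i := by
  rw [Real.rpow_sum_of_pos hc]
  exact prod_le_prod (fun i _ => Real.rpow_nonneg hc.le _)
    (fun i hi => Real.rpow_le_rpow hc.le (hcx i hi) (he i hi))

theorem abs_mul_sub_self_le {a b q B : ℝ} (ha : |a| ≤ B) (hqb : q ≤ b) (hb : b ≤ 1) :
    |a * b - a| ≤ B * (1 - q) :=
  calc |a * b - a| = |a| * (1 - b) := by
        rw [← abs_of_nonneg (sub_nonneg.2 hb), ← abs_mul, abs_sub_comm]; ring_nf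
    _ ≤ B * (1 - q) :=
        mul_le_mul ha (by linarith) (sub_nonneg.2 hb) ((abs_nonneg a).trans ha)

theorem tendsto_sum_div_natCast_sub_atTop {ι : Type*} (s : Finset ι) (β : ℝ) (τ : ι → ℕ) :
    Tendsto (fun t : ℕ => ∑ i ∈ s, β / ((t : ℝ) - τ i)) atTop (𝓝 0) := by
  rw [← sum_const_zero (s := s)]
  refine tendsto_finsetSum s fun i _ => ?_
  have hsub : Tendsto (fun t : ℕ => (t : ℝ) - τ i) atTop atTop :=
    tendsto_atTop_add_const_right _ _ tendsto_natCast_atTop_atTop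
  simpa [div_eq_mul_inv] using hsub.inv_tendsto_atTop.const_mul β

theorem dyna_acquisition_uniformly_tendsto_base_general
    {Λ : Type*} (c β B : ℝ) (hc : 0 < c)
    (hβ : 0 < β)
    (M : ℕ) (π : Fin M → Λ → ℝ)
    (hπ_lb : ∀ m l, c ≤ π m l) (hπ_ub : ∀ m l, π m l ≤ 1)
    (tm : Fin M → ℕ)
    (α : Λ → ℕ → ℝ) (hα : ∀ l t, |α l t| ≤ B)
    (αdyna : Λ → ℕ → ℝ)
    (hdyna : ∀ l t, αdyna l t =
      α l t * ∏ m : Fin M, π m l ^ (β / ((t : ℝ) - (tm m : ℝ)))) :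
    Filter.Tendsto (fun t : ℕ => ⨆ l : Λ, |αdyna l t - α l t|)
      Filter.atTop (nhds 0) := by
  set S : ℕ → ℝ := fun t => ∑ m : Fin M, β / ((t : ℝ) - tm m)
  have hbound : Tendsto (fun t => B * (1 - c ^ S t)) atTop (𝓝 0) := by
    have hcS : Tendsto (fun t => c ^ S t) atTop (𝓝 1) := by
      have h := (Real.continuousAt_const_rpow (b := 0) hc.ne').tendsto.comp
        (tendsto_sum_div_natCast_sub_atTop univ β tm)
      rwa [Real.rpow_zero] at h
    simpa using (hcS.const_sub 1).const_mul B
  have hpast : ∀ᶠ t : ℕ in atTop, ∀ m, (tm m : ℝ) < t :=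
    eventually_all.2 fun m =>
      (eventually_gt_atTop (tm m)).mono fun t ht => by exact_mod_cast ht
  refine tendsto_iSup_abs_zero_of_abs_le hbound ?_
  filter_upwards [hpast] with t ht l
  have hexp : ∀ m ∈ univ, 0 ≤ β / ((t : ℝ) - tm m) :=
    fun m _ => div_nonneg hβ.le (sub_nonneg.2 (ht m).le)
  rw [hdyna]
  exact abs_mul_sub_self_le (hα l t)
    (rpow_sum_le_prod_rpow univ hc (fun m _ => hπ_lb m l) hexp)
    (prod_rpow_le_one univ (fun m _ => hc.le.trans (hπ_lb m l)) (fun m _ => hπ_ub m l) hexp)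

/-- The dynamically adapted acquisition function
`α_dyna(λ, t) = α(λ, t) · ∏ₘ π⁽ᵐ⁾(λ) ^ (β / (t - t⁽ᵐ⁾))`, built from a uniformly
bounded base acquisition function `α` and finitely many priors with values in
`[c, 1]` provided at iterations `t⁽¹⁾ < … < t⁽ᴹ⁾`, converges uniformly to the
unadjusted acquisition function `α` as `t → ∞`. -/
theorem dyna_acquisition_uniformly_tendsto_base
    {Λ : Type*} [Nonempty Λ] (c β B : ℝ) (hc : 0 < c) (hc1 : c ≤ 1)
    (hβ : 0 < β) (hB : 0 ≤ B)
    (M : ℕ) (π : Fin M → Λ → ℝ)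
    (hπ_lb : ∀ m l, c ≤ π m l) (hπ_ub : ∀ m l, π m l ≤ 1)
    (tm : Fin M → ℕ) (htm : StrictMono tm)
    (α : Λ → ℕ → ℝ) (hα : ∀ l t, |α l t| ≤ B)
    (αdyna : Λ → ℕ → ℝ)
    (hdyna : ∀ l t, αdyna l t =
      α l t * ∏ m : Fin M, π m l ^ (β / ((t : ℝ) - (tm m : ℝ)))) :
    Filter.Tendsto (fun t : ℕ => ⨆ l : Λ, |αdyna l t - α l t|)
      Filter.atTop (nhds 0) :=
  dyna_acquisition_uniformly_tendsto_base_general c β B hc hβ M π hπ_lb hπ_ub tm α hα αdyna hdyna
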